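/- Direct sum property of the relative γ₂-norm: let D₁, D₂ be finite sets and A = (A_{xy} : Z₂ → Z₁), B = (B_{xy} : Z₂′ → Z₁′), Δ = (Δ_{xy} : X₂ → X₁), E = (E_{xy} : X₂′ → X₁′) families of linear maps between finite-dimensional complex inner product spaces, indexed by x ∈ D₁, y ∈ D₂. Then: (i) γ₂((A_{xy} ⊕ B_{xy})_{x,y} | (Δ_{xy} ⊕ E_{xy})_{x,y}) ≤ max{γ₂(A|Δ), γ₂(B|E)}, where A_{xy} ⊕ B_{xy} : Z₂ ⊕ Z₂′ → Z₁ ⊕ Z₁′ and Δ_{xy} ⊕ E_{xy} : X₂ ⊕ X₂′ → X₁ ⊕ X₁′ are the block-diagonal maps; (ii) γ₂((A_{xy} ⊕ B_{xy})_{x,y} | Δ) = max{γ₂(A|Δ), γ₂(B|Δ)}, where now B_{xy} : Z₂′ → Z₁′ and the common family Δ is used for both summands. -/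

import Mathlib

noncomputable section

open scoped ENNReal ComplexOrder

/-- A linear endomorphism of a finite-dimensional complex inner product space is unitary. -/
def IsUnitaryMap {E : Type*} [NormedAddCommGroup E] [InnerProductSpace ℂ E]
    [FiniteDimensional ℂ E] (f : E →ₗ[ℂ] E) : Prop :=
  LinearMap.adjoint f ∘ₗ f = LinearMap.id ∧ f ∘ₗ LinearMap.adjoint f = LinearMap.id

/-- Operator norm of a linear map between finite-dimensional inner product spaces. -/
noncomputable def opNorm {E F : Type*} [NormedAddCommGroup E] [InnerProductSpace ℂ E]
    [NormedAddCommGroup F] [InnerProductSpace ℂ F] [FiniteDimensional ℂ E]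
    (f : E →ₗ[ℂ] F) : ℝ :=
  ‖LinearMap.toContinuousLinearMap f‖

/-- A complex scalar viewed as a linear map `ℂ → ℂ`. -/
noncomputable def scalarMap (c : ℂ) : ℂ →ₗ[ℂ] ℂ := c • LinearMap.id

/-- The block-diagonal map `⊕ᵢ Δᵢ` on an `ℓ²`-direct sum of copies of a space. -/
noncomputable def piBlock {ι : Type*} [Fintype ι] {X₁ X₂ : Type*}
    [NormedAddCommGroup X₁] [InnerProductSpace ℂ X₁]
    [NormedAddCommGroup X₂] [InnerProductSpace ℂ X₂]
    (Δ : ι → (X₂ →ₗ[ℂ] X₁)) :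
    PiLp 2 (fun _ : ι => X₂) →ₗ[ℂ] PiLp 2 (fun _ : ι => X₁) :=
  (WithLp.linearEquiv 2 ℂ (∀ _ : ι, X₁)).symm.toLinearMap ∘ₗ
    (LinearMap.pi fun i => Δ i ∘ₗ LinearMap.proj i) ∘ₗ
      (WithLp.linearEquiv 2 ℂ (∀ _ : ι, X₂)).toLinearMap

/-- The relative `γ₂`-norm `γ₂(A | Δ)` of a family `A = (A_{xy} : Z₂ → Z₁)` relative to a
family `Δ = (Δ_{xy} : X₂ → X₁)`: the infimum over `k ∈ ℕ` and factorizations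
`A_{xy} = Υ_x* ∘ (Δ_{xy} ⊗ id_{ℂᵏ}) ∘ Φ_y` of `max (max_x ‖Υ_x‖²) (max_y ‖Φ_y‖²)`,
where `X ⊗ ℂᵏ` is realized as the `ℓ²`-direct sum of `k` copies of `X`.
The infimum of the empty set is `+∞`. -/
noncomputable def relGamma2 {D₁ D₂ : Type*} [Fintype D₁] [Fintype D₂]
    {X₁ X₂ Z₁ Z₂ : Type*}
    [NormedAddCommGroup X₁] [InnerProductSpace ℂ X₁] [FiniteDimensional ℂ X₁]
    [NormedAddCommGroup X₂] [InnerProductSpace ℂ X₂] [FiniteDimensional ℂ X₂]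
    [NormedAddCommGroup Z₁] [InnerProductSpace ℂ Z₁] [FiniteDimensional ℂ Z₁]
    [NormedAddCommGroup Z₂] [InnerProductSpace ℂ Z₂] [FiniteDimensional ℂ Z₂]
    (A : D₁ → D₂ → (Z₂ →ₗ[ℂ] Z₁)) (Δ : D₁ → D₂ → (X₂ →ₗ[ℂ] X₁)) : ℝ≥0∞ :=
  ⨅ (k : ℕ) (Υ : D₁ → (Z₁ →ₗ[ℂ] PiLp 2 (fun _ : Fin k => X₁)))
    (Φ : D₂ → (Z₂ →ₗ[ℂ] PiLp 2 (fun _ : Fin k => X₂)))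
    (_ : ∀ x y, A x y =
      LinearMap.adjoint (Υ x) ∘ₗ piBlock (fun _ : Fin k => Δ x y) ∘ₗ Φ y),
    (⨆ x, ENNReal.ofReal (opNorm (Υ x) ^ 2)) ⊔ (⨆ y, ENNReal.ofReal (opNorm (Φ y) ^ 2))

/-- Block-diagonal direct sum `f ⊕ g` on the `ℓ²`-direct sum of two spaces. -/
noncomputable def dsum {E E' F F' : Type*}
    [NormedAddCommGroup E] [InnerProductSpace ℂ E]
    [NormedAddCommGroup E'] [InnerProductSpace ℂ E']
    [NormedAddCommGroup F] [InnerProductSpace ℂ F]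
    [NormedAddCommGroup F'] [InnerProductSpace ℂ F']
    (f : E →ₗ[ℂ] F) (g : E' →ₗ[ℂ] F') :
    WithLp 2 (E × E') →ₗ[ℂ] WithLp 2 (F × F') :=
  (WithLp.linearEquiv 2 ℂ (F × F')).symm.toLinearMap ∘ₗ
    (LinearMap.prodMap f g) ∘ₗ (WithLp.linearEquiv 2 ℂ (E × E')).toLinearMap

/-! Compressing a factorization of `A ⊕ B` by the coordinate inclusions `ι` (contractions, with
`ι₁* (A ⊕ B) ι₁ = A`) gives factorizations of `A` and `B` of no larger cost. Conversely,
factorizations of `A` and `B` with `k` and `k'` auxiliary coordinates concatenate to one of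
`A ⊕ B` with `k + k'` coordinates; the two halves live on disjoint blocks of coordinates, so the
cost is the maximum of the two costs. For (i), `Δ = ι₁* (Δ ⊕ E) ι₁` and a factorization relative
to such a compression lifts to one relative to `Δ ⊕ E` by composing with `ι₁ ⊗ id`, again without
increasing the cost. -/

section OperatorNorm

variable {E F G : Type*} [NormedAddCommGroup E] [InnerProductSpace ℂ E] [FiniteDimensional ℂ E]
  [NormedAddCommGroup F] [InnerProductSpace ℂ F] [NormedAddCommGroup G] [InnerProductSpace ℂ G]

lemma opNorm_nonneg (f : E →ₗ[ℂ] F) : 0 ≤ opNorm f := norm_nonneg _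

lemma le_opNorm (f : E →ₗ[ℂ] F) (v : E) : ‖f v‖ ≤ opNorm f * ‖v‖ :=
  (LinearMap.toContinuousLinearMap f).le_opNorm v

lemma sq_norm_apply_le (f : E →ₗ[ℂ] F) (v : E) : ‖f v‖ ^ 2 ≤ opNorm f ^ 2 * ‖v‖ ^ 2 := by
  rw [← mul_pow]
  exact pow_le_pow_left₀ (norm_nonneg _) (le_opNorm f v) 2

lemma opNorm_le_of_forall {f : E →ₗ[ℂ] F} {C : ℝ} (hC : 0 ≤ C) (h : ∀ v, ‖f v‖ ≤ C * ‖v‖) :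
    opNorm f ≤ C :=
  ContinuousLinearMap.opNorm_le_bound _ hC h

lemma opNorm_le_of_forall_sq {f : E →ₗ[ℂ] F} {C : ℝ} (hC : 0 ≤ C)
    (h : ∀ v, ‖f v‖ ^ 2 ≤ C ^ 2 * ‖v‖ ^ 2) : opNorm f ≤ C :=
  opNorm_le_of_forall hC fun v =>
    (pow_le_pow_iff_left₀ (norm_nonneg _) (by positivity) two_ne_zero).1
      (by rw [mul_pow]; exact h v)

lemma opNorm_comp_le [FiniteDimensional ℂ F] (g : F →ₗ[ℂ] G) (f : E →ₗ[ℂ] F) :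
    opNorm (g ∘ₗ f) ≤ opNorm g * opNorm f :=
  ContinuousLinearMap.opNorm_comp_le (LinearMap.toContinuousLinearMap g)
    (LinearMap.toContinuousLinearMap f)

lemma opNorm_comp_le_opNorm_left [FiniteDimensional ℂ F] (g : F →ₗ[ℂ] G) {f : E →ₗ[ℂ] F}
    (hf : opNorm f ≤ 1) : opNorm (g ∘ₗ f) ≤ opNorm g :=
  (opNorm_comp_le g f).trans (mul_le_of_le_one_right (opNorm_nonneg g) hf)

lemma opNorm_comp_le_opNorm_right [FiniteDimensional ℂ F] {g : F →ₗ[ℂ] G} (f : E →ₗ[ℂ] F)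
    (hg : opNorm g ≤ 1) : opNorm (g ∘ₗ f) ≤ opNorm f :=
  (opNorm_comp_le g f).trans (mul_le_of_le_one_left (opNorm_nonneg f) hg)

lemma ofReal_sq_opNorm_le {E' F' : Type*}
    [NormedAddCommGroup E'] [InnerProductSpace ℂ E'] [FiniteDimensional ℂ E']
    [NormedAddCommGroup F'] [InnerProductSpace ℂ F'] {f : E →ₗ[ℂ] F} {g : E' →ₗ[ℂ] F'}
    (h : opNorm f ≤ opNorm g) :
    ENNReal.ofReal (opNorm f ^ 2) ≤ ENNReal.ofReal (opNorm g ^ 2) :=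
  ENNReal.ofReal_le_ofReal (pow_le_pow_left₀ (opNorm_nonneg f) h 2)

end OperatorNorm

section piBlock

variable {ι : Type*} [Fintype ι] {X Y W : Type*}
  [NormedAddCommGroup X] [InnerProductSpace ℂ X] [NormedAddCommGroup Y] [InnerProductSpace ℂ Y]
  [NormedAddCommGroup W] [InnerProductSpace ℂ W]

@[simp] lemma piBlock_apply (f : ι → X →ₗ[ℂ] Y) (v : PiLp 2 (fun _ : ι => X)) (i : ι) :
    piBlock f v i = f i (v i) := rfl

lemma piBlock_comp (g : ι → Y →ₗ[ℂ] W) (f : ι → X →ₗ[ℂ] Y) :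
    piBlock (fun i => g i ∘ₗ f i) = piBlock g ∘ₗ piBlock f := rfl

lemma adjoint_piBlock [FiniteDimensional ℂ X] [FiniteDimensional ℂ Y] (f : ι → X →ₗ[ℂ] Y) :
    LinearMap.adjoint (piBlock f) = piBlock fun i => LinearMap.adjoint (f i) := by
  refine ((LinearMap.eq_adjoint_iff _ _).2 fun u v => ?_).symm
  simp [PiLp.inner_apply, LinearMap.adjoint_inner_left]

lemma opNorm_piBlock_le [FiniteDimensional ℂ X] (f : ι → X →ₗ[ℂ] Y) {C : ℝ} (hC : 0 ≤ C)
    (hf : ∀ i, opNorm (f i) ≤ C) : opNorm (piBlock f) ≤ C := by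
  refine opNorm_le_of_forall_sq hC fun v => ?_
  rw [PiLp.norm_sq_eq_of_L2, PiLp.norm_sq_eq_of_L2, Finset.mul_sum]
  refine Finset.sum_le_sum fun i _ => (sq_norm_apply_le (f i) (v i)).trans ?_
  gcongr
  · exact opNorm_nonneg _
  · exact hf i

end piBlock

section DirectSum

variable {E E' F F' : Type*}
  [NormedAddCommGroup E] [InnerProductSpace ℂ E] [NormedAddCommGroup E'] [InnerProductSpace ℂ E']
  [NormedAddCommGroup F] [InnerProductSpace ℂ F] [NormedAddCommGroup F'] [InnerProductSpace ℂ F']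

@[simp] lemma dsum_fst (f : E →ₗ[ℂ] F) (g : E' →ₗ[ℂ] F') (p : WithLp 2 (E × E')) :
    (dsum f g p).fst = f p.fst := rfl

@[simp] lemma dsum_snd (f : E →ₗ[ℂ] F) (g : E' →ₗ[ℂ] F') (p : WithLp 2 (E × E')) :
    (dsum f g p).snd = g p.snd := rfl

variable (E E') in
def inlL : E →ₗ[ℂ] WithLp 2 (E × E') :=
  (WithLp.linearEquiv 2 ℂ (E × E')).symm.toLinearMap ∘ₗ LinearMap.inl ℂ E E'

variable (E E') in
def inrL : E' →ₗ[ℂ] WithLp 2 (E × E') :=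
  (WithLp.linearEquiv 2 ℂ (E × E')).symm.toLinearMap ∘ₗ LinearMap.inr ℂ E E'

lemma inlL_apply (v : E) : inlL E E' v = WithLp.toLp 2 (v, 0) := rfl

lemma inrL_apply (v : E') : inrL E E' v = WithLp.toLp 2 (0, v) := rfl

lemma opNorm_inlL_le_one [FiniteDimensional ℂ E] : opNorm (inlL E E') ≤ 1 :=
  opNorm_le_of_forall zero_le_one fun v => by simp [inlL_apply]

lemma opNorm_inrL_le_one [FiniteDimensional ℂ E'] : opNorm (inrL E E') ≤ 1 :=
  opNorm_le_of_forall zero_le_one fun v => by simp [inrL_apply]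

variable [FiniteDimensional ℂ F] [FiniteDimensional ℂ F']

lemma adjoint_inlL_comp_dsum_comp_inlL (f : E →ₗ[ℂ] F) (g : E' →ₗ[ℂ] F') :
    LinearMap.adjoint (inlL F F') ∘ₗ dsum f g ∘ₗ inlL E E' = f := by
  ext v
  refine ext_inner_left ℂ fun u => ?_
  simp [LinearMap.adjoint_inner_right, WithLp.prod_inner_apply, inlL_apply]

lemma adjoint_inrL_comp_dsum_comp_inrL (f : E →ₗ[ℂ] F) (g : E' →ₗ[ℂ] F') :
    LinearMap.adjoint (inrL F F') ∘ₗ dsum f g ∘ₗ inrL E E' = g := by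
  ext v
  refine ext_inner_left ℂ fun u => ?_
  simp [LinearMap.adjoint_inner_right, WithLp.prod_inner_apply, inrL_apply]

end DirectSum

section Append

variable {X Z Z' : Type*} [NormedAddCommGroup X] [InnerProductSpace ℂ X]
  [NormedAddCommGroup Z] [InnerProductSpace ℂ Z] [NormedAddCommGroup Z'] [InnerProductSpace ℂ Z']
  {k k' : ℕ}

def appendMap (f : Z →ₗ[ℂ] PiLp 2 (fun _ : Fin k => X))
    (g : Z' →ₗ[ℂ] PiLp 2 (fun _ : Fin k' => X)) :
    WithLp 2 (Z × Z') →ₗ[ℂ] PiLp 2 (fun _ : Fin (k + k') => X) :=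
  (WithLp.linearEquiv 2 ℂ (∀ _ : Fin (k + k'), X)).symm.toLinearMap ∘ₗ
    LinearMap.pi (Fin.addCases
      (fun i => LinearMap.proj i ∘ₗ (WithLp.linearEquiv 2 ℂ (∀ _ : Fin k, X)).toLinearMap ∘ₗ f ∘ₗ
        LinearMap.fst ℂ Z Z' ∘ₗ (WithLp.linearEquiv 2 ℂ (Z × Z')).toLinearMap)
      (fun j => LinearMap.proj j ∘ₗ (WithLp.linearEquiv 2 ℂ (∀ _ : Fin k', X)).toLinearMap ∘ₗ g ∘ₗ
        LinearMap.snd ℂ Z Z' ∘ₗ (WithLp.linearEquiv 2 ℂ (Z × Z')).toLinearMap))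

variable (f : Z →ₗ[ℂ] PiLp 2 (fun _ : Fin k => X)) (g : Z' →ₗ[ℂ] PiLp 2 (fun _ : Fin k' => X))

@[simp] lemma appendMap_apply_castAdd (p : WithLp 2 (Z × Z')) (i : Fin k) :
    appendMap f g p (Fin.castAdd k' i) = f p.fst i := by
  simp [appendMap]

@[simp] lemma appendMap_apply_natAdd (p : WithLp 2 (Z × Z')) (j : Fin k') :
    appendMap f g p (Fin.natAdd k j) = g p.snd j := by
  simp [appendMap]

lemma sq_norm_appendMap_apply (p : WithLp 2 (Z × Z')) :
    ‖appendMap f g p‖ ^ 2 = ‖f p.fst‖ ^ 2 + ‖g p.snd‖ ^ 2 := by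
  simp [PiLp.norm_sq_eq_of_L2, Fin.sum_univ_add]

lemma opNorm_appendMap_le [FiniteDimensional ℂ Z] [FiniteDimensional ℂ Z'] :
    opNorm (appendMap f g) ≤ max (opNorm f) (opNorm g) := by
  set M := max (opNorm f) (opNorm g)
  have hf : opNorm f ^ 2 ≤ M ^ 2 := pow_le_pow_left₀ (opNorm_nonneg f) (le_max_left _ _) 2
  have hg : opNorm g ^ 2 ≤ M ^ 2 := pow_le_pow_left₀ (opNorm_nonneg g) (le_max_right _ _) 2
  refine opNorm_le_of_forall_sq (le_max_of_le_left (opNorm_nonneg f)) fun p => ?_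
  calc ‖appendMap f g p‖ ^ 2 = ‖f p.fst‖ ^ 2 + ‖g p.snd‖ ^ 2 := sq_norm_appendMap_apply f g p
    _ ≤ opNorm f ^ 2 * ‖p.fst‖ ^ 2 + opNorm g ^ 2 * ‖p.snd‖ ^ 2 :=
      add_le_add (sq_norm_apply_le f _) (sq_norm_apply_le g _)
    _ ≤ M ^ 2 * ‖p.fst‖ ^ 2 + M ^ 2 * ‖p.snd‖ ^ 2 := by gcongr
    _ = M ^ 2 * ‖p‖ ^ 2 := by rw [WithLp.prod_norm_sq_eq_of_L2, mul_add]

lemma adjoint_appendMap_comp_piBlock_comp_appendMap {Y W W' : Type*}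
    [NormedAddCommGroup Y] [InnerProductSpace ℂ Y] [NormedAddCommGroup W] [InnerProductSpace ℂ W]
    [NormedAddCommGroup W'] [InnerProductSpace ℂ W']
    [FiniteDimensional ℂ X] [FiniteDimensional ℂ Z] [FiniteDimensional ℂ Z']
    (f' : W →ₗ[ℂ] PiLp 2 (fun _ : Fin k => Y)) (g' : W' →ₗ[ℂ] PiLp 2 (fun _ : Fin k' => Y))
    (T : Y →ₗ[ℂ] X) :
    LinearMap.adjoint (appendMap f g) ∘ₗ piBlock (fun _ => T) ∘ₗ appendMap f' g' =
      dsum (LinearMap.adjoint f ∘ₗ piBlock (fun _ => T) ∘ₗ f')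
        (LinearMap.adjoint g ∘ₗ piBlock (fun _ => T) ∘ₗ g') := by
  ext p
  refine ext_inner_left ℂ fun u => ?_
  simp [LinearMap.adjoint_inner_right, WithLp.prod_inner_apply, PiLp.inner_apply,
    Fin.sum_univ_add]

end Append

section FactorizationCost

variable {D₁ D₂ : Type*} {U₁ U₂ V₁ V₂ W₁ W₂ P₁ P₂ Q₁ Q₂ R₁ R₂ : Type*}
  [NormedAddCommGroup U₁] [InnerProductSpace ℂ U₁] [FiniteDimensional ℂ U₁]
  [NormedAddCommGroup U₂] [InnerProductSpace ℂ U₂] [FiniteDimensional ℂ U₂]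
  [NormedAddCommGroup V₁] [InnerProductSpace ℂ V₁] [FiniteDimensional ℂ V₁]
  [NormedAddCommGroup V₂] [InnerProductSpace ℂ V₂] [FiniteDimensional ℂ V₂]
  [NormedAddCommGroup W₁] [InnerProductSpace ℂ W₁] [FiniteDimensional ℂ W₁]
  [NormedAddCommGroup W₂] [InnerProductSpace ℂ W₂] [FiniteDimensional ℂ W₂]
  [NormedAddCommGroup P₁] [InnerProductSpace ℂ P₁] [NormedAddCommGroup P₂] [InnerProductSpace ℂ P₂]
  [NormedAddCommGroup Q₁] [InnerProductSpace ℂ Q₁] [NormedAddCommGroup Q₂] [InnerProductSpace ℂ Q₂]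
  [NormedAddCommGroup R₁] [InnerProductSpace ℂ R₁] [NormedAddCommGroup R₂] [InnerProductSpace ℂ R₂]

def factorizationCost (Υ : D₁ → (U₁ →ₗ[ℂ] P₁)) (Φ : D₂ → (U₂ →ₗ[ℂ] P₂)) : ℝ≥0∞ :=
  (⨆ x, ENNReal.ofReal (opNorm (Υ x) ^ 2)) ⊔ (⨆ y, ENNReal.ofReal (opNorm (Φ y) ^ 2))

lemma factorizationCost_mono {Υ : D₁ → (U₁ →ₗ[ℂ] P₁)} {Φ : D₂ → (U₂ →ₗ[ℂ] P₂)}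
    {Υ' : D₁ → (V₁ →ₗ[ℂ] Q₁)} {Φ' : D₂ → (V₂ →ₗ[ℂ] Q₂)}
    (hΥ : ∀ x, opNorm (Υ' x) ≤ opNorm (Υ x)) (hΦ : ∀ y, opNorm (Φ' y) ≤ opNorm (Φ y)) :
    factorizationCost Υ' Φ' ≤ factorizationCost Υ Φ :=
  sup_le_sup (iSup_mono fun x => ofReal_sq_opNorm_le (hΥ x))
    (iSup_mono fun y => ofReal_sq_opNorm_le (hΦ y))

lemma factorizationCost_le_sup {Υ : D₁ → (U₁ →ₗ[ℂ] P₁)} {Φ : D₂ → (U₂ →ₗ[ℂ] P₂)}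
    {Υ' : D₁ → (V₁ →ₗ[ℂ] Q₁)} {Φ' : D₂ → (V₂ →ₗ[ℂ] Q₂)}
    {Υ'' : D₁ → (W₁ →ₗ[ℂ] R₁)} {Φ'' : D₂ → (W₂ →ₗ[ℂ] R₂)}
    (hΥ : ∀ x, opNorm (Υ'' x) ≤ max (opNorm (Υ x)) (opNorm (Υ' x)))
    (hΦ : ∀ y, opNorm (Φ'' y) ≤ max (opNorm (Φ y)) (opNorm (Φ' y))) :
    factorizationCost Υ'' Φ'' ≤ factorizationCost Υ Φ ⊔ factorizationCost Υ' Φ' := by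
  rw [factorizationCost, factorizationCost, factorizationCost, sup_sup_sup_comm]
  refine sup_le_sup (iSup_le fun x => ?_) (iSup_le fun y => ?_)
  · rcases le_max_iff.1 (hΥ x) with h | h
    · exact le_sup_of_le_left (le_iSup_of_le x (ofReal_sq_opNorm_le h))
    · exact le_sup_of_le_right (le_iSup_of_le x (ofReal_sq_opNorm_le h))
  · rcases le_max_iff.1 (hΦ y) with h | h
    · exact le_sup_of_le_left (le_iSup_of_le y (ofReal_sq_opNorm_le h))
    · exact le_sup_of_le_right (le_iSup_of_le y (ofReal_sq_opNorm_le h))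

end FactorizationCost

section Factorization

variable {D₁ D₂ : Type*} {X₁ X₂ Y₁ Y₂ Z₁ Z₂ Z₁' Z₂' : Type*}
  [NormedAddCommGroup X₁] [InnerProductSpace ℂ X₁] [FiniteDimensional ℂ X₁]
  [NormedAddCommGroup X₂] [InnerProductSpace ℂ X₂]
  [NormedAddCommGroup Y₁] [InnerProductSpace ℂ Y₁] [FiniteDimensional ℂ Y₁]
  [NormedAddCommGroup Y₂] [InnerProductSpace ℂ Y₂]
  [NormedAddCommGroup Z₁] [InnerProductSpace ℂ Z₁] [FiniteDimensional ℂ Z₁]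
  [NormedAddCommGroup Z₂] [InnerProductSpace ℂ Z₂]
  [NormedAddCommGroup Z₁'] [InnerProductSpace ℂ Z₁'] [FiniteDimensional ℂ Z₁']
  [NormedAddCommGroup Z₂'] [InnerProductSpace ℂ Z₂']

def IsFactorization {k : ℕ} (A : D₁ → D₂ → (Z₂ →ₗ[ℂ] Z₁)) (Δ : D₁ → D₂ → (X₂ →ₗ[ℂ] X₁))
    (Υ : D₁ → (Z₁ →ₗ[ℂ] PiLp 2 (fun _ : Fin k => X₁)))
    (Φ : D₂ → (Z₂ →ₗ[ℂ] PiLp 2 (fun _ : Fin k => X₂))) : Prop :=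
  ∀ x y, A x y = LinearMap.adjoint (Υ x) ∘ₗ piBlock (fun _ : Fin k => Δ x y) ∘ₗ Φ y

variable {k : ℕ} {A : D₁ → D₂ → (Z₂ →ₗ[ℂ] Z₁)} {Δ : D₁ → D₂ → (X₂ →ₗ[ℂ] X₁)}
  {Υ : D₁ → (Z₁ →ₗ[ℂ] PiLp 2 (fun _ : Fin k => X₁))}
  {Φ : D₂ → (Z₂ →ₗ[ℂ] PiLp 2 (fun _ : Fin k => X₂))}

lemma IsFactorization.adjoint_comp_comp (h : IsFactorization A Δ Υ Φ)
    (S : Z₁' →ₗ[ℂ] Z₁) (T : Z₂' →ₗ[ℂ] Z₂) :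
    IsFactorization (fun x y => LinearMap.adjoint S ∘ₗ A x y ∘ₗ T) Δ
      (fun x => Υ x ∘ₗ S) (fun y => Φ y ∘ₗ T) := by
  intro x y
  simp only [h x y, LinearMap.adjoint_comp, LinearMap.comp_assoc]

lemma IsFactorization.of_adjoint_comp_comp {Γ : D₁ → D₂ → (Y₂ →ₗ[ℂ] Y₁)}
    {J : X₁ →ₗ[ℂ] Y₁} {K : X₂ →ₗ[ℂ] Y₂}
    (h : IsFactorization A (fun x y => LinearMap.adjoint J ∘ₗ Γ x y ∘ₗ K) Υ Φ) :
    IsFactorization A Γ (fun x => piBlock (fun _ => J) ∘ₗ Υ x)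
      (fun y => piBlock (fun _ => K) ∘ₗ Φ y) := by
  intro x y
  simp only [h x y, piBlock_comp, LinearMap.adjoint_comp, adjoint_piBlock, LinearMap.comp_assoc]

lemma IsFactorization.append {k' : ℕ} {B : D₁ → D₂ → (Z₂' →ₗ[ℂ] Z₁')}
    {Υ' : D₁ → (Z₁' →ₗ[ℂ] PiLp 2 (fun _ : Fin k' => X₁))}
    {Φ' : D₂ → (Z₂' →ₗ[ℂ] PiLp 2 (fun _ : Fin k' => X₂))}
    (hA : IsFactorization A Δ Υ Φ) (hB : IsFactorization B Δ Υ' Φ') :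
    IsFactorization (fun x y => dsum (A x y) (B x y)) Δ
      (fun x => appendMap (Υ x) (Υ' x)) (fun y => appendMap (Φ y) (Φ' y)) := by
  intro x y
  rw [adjoint_appendMap_comp_piBlock_comp_appendMap, ← hA x y, ← hB x y]

end Factorization

section RelGamma2

variable {D₁ D₂ : Type*} [Fintype D₁] [Fintype D₂] {X₁ X₂ Y₁ Y₂ Z₁ Z₂ Z₁' Z₂' : Type*}
  [NormedAddCommGroup X₁] [InnerProductSpace ℂ X₁] [FiniteDimensional ℂ X₁]
  [NormedAddCommGroup X₂] [InnerProductSpace ℂ X₂] [FiniteDimensional ℂ X₂]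
  [NormedAddCommGroup Y₁] [InnerProductSpace ℂ Y₁] [FiniteDimensional ℂ Y₁]
  [NormedAddCommGroup Y₂] [InnerProductSpace ℂ Y₂] [FiniteDimensional ℂ Y₂]
  [NormedAddCommGroup Z₁] [InnerProductSpace ℂ Z₁] [FiniteDimensional ℂ Z₁]
  [NormedAddCommGroup Z₂] [InnerProductSpace ℂ Z₂] [FiniteDimensional ℂ Z₂]
  [NormedAddCommGroup Z₁'] [InnerProductSpace ℂ Z₁'] [FiniteDimensional ℂ Z₁']
  [NormedAddCommGroup Z₂'] [InnerProductSpace ℂ Z₂'] [FiniteDimensional ℂ Z₂']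

lemma relGamma2_eq_iInf (A : D₁ → D₂ → (Z₂ →ₗ[ℂ] Z₁)) (Δ : D₁ → D₂ → (X₂ →ₗ[ℂ] X₁)) :
    relGamma2 A Δ = ⨅ (k : ℕ) (Υ : D₁ → (Z₁ →ₗ[ℂ] PiLp 2 (fun _ : Fin k => X₁)))
      (Φ : D₂ → (Z₂ →ₗ[ℂ] PiLp 2 (fun _ : Fin k => X₂))) (_ : IsFactorization A Δ Υ Φ),
      factorizationCost Υ Φ := rfl

lemma relGamma2_le_factorizationCost {A : D₁ → D₂ → (Z₂ →ₗ[ℂ] Z₁)}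
    {Δ : D₁ → D₂ → (X₂ →ₗ[ℂ] X₁)} {k : ℕ} {Υ : D₁ → (Z₁ →ₗ[ℂ] PiLp 2 (fun _ : Fin k => X₁))}
    {Φ : D₂ → (Z₂ →ₗ[ℂ] PiLp 2 (fun _ : Fin k => X₂))} (h : IsFactorization A Δ Υ Φ) :
    relGamma2 A Δ ≤ factorizationCost Υ Φ :=
  iInf_le_of_le k <| iInf_le_of_le Υ <| iInf_le_of_le Φ <| iInf_le _ h

lemma relGamma2_adjoint_comp_comp_le (A : D₁ → D₂ → (Z₂ →ₗ[ℂ] Z₁)) (Δ : D₁ → D₂ → (X₂ →ₗ[ℂ] X₁))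
    {S : Z₁' →ₗ[ℂ] Z₁} {T : Z₂' →ₗ[ℂ] Z₂} (hS : opNorm S ≤ 1) (hT : opNorm T ≤ 1) :
    relGamma2 (fun x y => LinearMap.adjoint S ∘ₗ A x y ∘ₗ T) Δ ≤ relGamma2 A Δ := by
  rw [relGamma2_eq_iInf A Δ]
  refine le_iInf₂ fun k Υ => le_iInf₂ fun Φ h => ?_
  exact (relGamma2_le_factorizationCost (h.adjoint_comp_comp S T)).trans
    (factorizationCost_mono (fun x => opNorm_comp_le_opNorm_left _ hS)
      fun y => opNorm_comp_le_opNorm_left _ hT)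

lemma relGamma2_le_relGamma2_adjoint_comp_comp (A : D₁ → D₂ → (Z₂ →ₗ[ℂ] Z₁))
    (Γ : D₁ → D₂ → (Y₂ →ₗ[ℂ] Y₁)) {J : X₁ →ₗ[ℂ] Y₁} {K : X₂ →ₗ[ℂ] Y₂}
    (hJ : opNorm J ≤ 1) (hK : opNorm K ≤ 1) :
    relGamma2 A Γ ≤ relGamma2 A (fun x y => LinearMap.adjoint J ∘ₗ Γ x y ∘ₗ K) := by
  rw [relGamma2_eq_iInf A (fun x y => LinearMap.adjoint J ∘ₗ Γ x y ∘ₗ K)]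
  refine le_iInf₂ fun k Υ => le_iInf₂ fun Φ h => ?_
  exact (relGamma2_le_factorizationCost h.of_adjoint_comp_comp).trans
    (factorizationCost_mono
      (fun x => opNorm_comp_le_opNorm_right _ (opNorm_piBlock_le _ zero_le_one fun _ => hJ))
      fun y => opNorm_comp_le_opNorm_right _ (opNorm_piBlock_le _ zero_le_one fun _ => hK))

lemma relGamma2_dsum_le (A : D₁ → D₂ → (Z₂ →ₗ[ℂ] Z₁)) (B : D₁ → D₂ → (Z₂' →ₗ[ℂ] Z₁'))
    (Δ : D₁ → D₂ → (X₂ →ₗ[ℂ] X₁)) :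
    relGamma2 (fun x y => dsum (A x y) (B x y)) Δ ≤ relGamma2 A Δ ⊔ relGamma2 B Δ := by
  simp only [relGamma2_eq_iInf A, relGamma2_eq_iInf B, iInf_sup_eq, sup_iInf_eq, le_iInf_iff]
  intro k' Υ' Φ' hB k Υ Φ hA
  exact (relGamma2_le_factorizationCost (hA.append hB)).trans
    (factorizationCost_le_sup (fun x => opNorm_appendMap_le _ _) fun y => opNorm_appendMap_le _ _)

end RelGamma2

/-- Direct sum property of the relative `γ₂`-norm:
(i) `γ₂(A ⊕ B | Δ ⊕ E) ≤ max(γ₂(A|Δ), γ₂(B|E))`;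
(ii) `γ₂(A ⊕ B | Δ) = max(γ₂(A|Δ), γ₂(B|Δ))`. -/
theorem statement7 {D₁ D₂ : Type} [Fintype D₁] [Fintype D₂]
    {X₁ X₂ X₁' X₂' Z₁ Z₂ Z₁' Z₂' : Type}
    [NormedAddCommGroup X₁] [InnerProductSpace ℂ X₁] [FiniteDimensional ℂ X₁]
    [NormedAddCommGroup X₂] [InnerProductSpace ℂ X₂] [FiniteDimensional ℂ X₂]
    [NormedAddCommGroup X₁'] [InnerProductSpace ℂ X₁'] [FiniteDimensional ℂ X₁']
    [NormedAddCommGroup X₂'] [InnerProductSpace ℂ X₂'] [FiniteDimensional ℂ X₂']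
    [NormedAddCommGroup Z₁] [InnerProductSpace ℂ Z₁] [FiniteDimensional ℂ Z₁]
    [NormedAddCommGroup Z₂] [InnerProductSpace ℂ Z₂] [FiniteDimensional ℂ Z₂]
    [NormedAddCommGroup Z₁'] [InnerProductSpace ℂ Z₁'] [FiniteDimensional ℂ Z₁']
    [NormedAddCommGroup Z₂'] [InnerProductSpace ℂ Z₂'] [FiniteDimensional ℂ Z₂']
    (A : D₁ → D₂ → (Z₂ →ₗ[ℂ] Z₁)) (B : D₁ → D₂ → (Z₂' →ₗ[ℂ] Z₁'))
    (Δ : D₁ → D₂ → (X₂ →ₗ[ℂ] X₁)) (E : D₁ → D₂ → (X₂' →ₗ[ℂ] X₁')) :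
    (relGamma2 (fun x y => dsum (A x y) (B x y)) (fun x y => dsum (Δ x y) (E x y)) ≤
        max (relGamma2 A Δ) (relGamma2 B E)) ∧
    (relGamma2 (fun x y => dsum (A x y) (B x y)) Δ =
        max (relGamma2 A Δ) (relGamma2 B Δ)) := by
  have hA : relGamma2 A Δ ≤ relGamma2 (fun x y => dsum (A x y) (B x y)) Δ := by
    simpa only [adjoint_inlL_comp_dsum_comp_inlL] using
      relGamma2_adjoint_comp_comp_le (fun x y => dsum (A x y) (B x y)) Δ
        opNorm_inlL_le_one opNorm_inlL_le_one
  have hB : relGamma2 B Δ ≤ relGamma2 (fun x y => dsum (A x y) (B x y)) Δ := by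
    simpa only [adjoint_inrL_comp_dsum_comp_inrL] using
      relGamma2_adjoint_comp_comp_le (fun x y => dsum (A x y) (B x y)) Δ
        opNorm_inrL_le_one opNorm_inrL_le_one
  refine ⟨?_, le_antisymm (relGamma2_dsum_le A B Δ) (max_le hA hB)⟩
  calc relGamma2 (fun x y => dsum (A x y) (B x y)) (fun x y => dsum (Δ x y) (E x y))
      ≤ max (relGamma2 A fun x y => dsum (Δ x y) (E x y))
          (relGamma2 B fun x y => dsum (Δ x y) (E x y)) := relGamma2_dsum_le A B _
    _ ≤ max (relGamma2 A Δ) (relGamma2 B E) := by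
      gcongr
      · simpa only [adjoint_inlL_comp_dsum_comp_inlL] using
          relGamma2_le_relGamma2_adjoint_comp_comp A (fun x y => dsum (Δ x y) (E x y))
            opNorm_inlL_le_one opNorm_inlL_le_one
      · simpa only [adjoint_inrL_comp_dsum_comp_inrL] using
          relGamma2_le_relGamma2_adjoint_comp_comp B (fun x y => dsum (Δ x y) (E x y))
            opNorm_inrL_le_one opNorm_inrL_le_one

end
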